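/- Let Δ be an α-saturated set of vD-formulas (with respect to the vD consequence relation ⊢), for some vD-formula α. Then for every vD-formula β: ∘β ∈ Δ if and only if β ∉ Δ or ¬β ∉ Δ. -/
import Mathlib


/-- Formulas of the logic vD. -/
inductive VForm : Type
  | var : ℕ → VForm
  | conj : VForm → VForm → VForm
  | disj : VForm → VForm → VForm
  | imp : VForm → VForm → VForm
  | neg : VForm → VForm
  | circ : VForm → VForm

/-- The bottom formula ⊥ := β₀ ∧ (¬β₀ ∧ ∘β₀), for the fixed formula `b = β₀`. -/
def vBot (b : VForm) : VForm := .conj b (.conj (.neg b) (.circ b))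

/-- The defined classical negation ~α := α → ⊥. -/
def vNot (b : VForm) (a : VForm) : VForm := .imp a (vBot b)

/-- Axiom schemas (1)–(18) of the Hilbert system for vD. -/
inductive VAx (b : VForm) : VForm → Prop
  | a1 (α β : VForm) : VAx b (.imp α (.imp β α))
  | a2 (α β γ : VForm) :
      VAx b (.imp (.imp α (.imp β γ)) (.imp (.imp α β) (.imp α γ)))
  | a3 (α β : VForm) : VAx b (.imp α (.imp β (.conj α β)))
  | a4 (α β : VForm) : VAx b (.imp (.conj α β) α)
  | a5 (α β : VForm) : VAx b (.imp (.conj α β) β)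
  | a6 (α β : VForm) : VAx b (.imp α (.disj α β))
  | a7 (α β : VForm) : VAx b (.imp β (.disj α β))
  | a8 (α β : VForm) : VAx b (.disj (.imp α β) α)
  | a9 (α : VForm) : VAx b (.disj α (.neg α))
  | a10 (α γ : VForm) :
      VAx b (.imp (.imp α γ) (.imp (.imp (.neg α) γ) (.imp (.disj α (.neg α)) γ)))
  | a11 (α β γ : VForm) :
      VAx b (.imp (.imp (.imp α β) γ)
        (.imp (.imp α γ) (.imp (.disj (.imp α β) α) γ)))
  | a12 (α β : VForm) : VAx b (.imp (.circ α) (.imp α (.imp (.neg α) β)))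
  | a13 (α : VForm) : VAx b (.disj (.circ α) (.conj α (.neg α)))
  | a14 (α γ : VForm) :
      VAx b (.imp (.imp (.circ α) γ)
        (.imp (.imp (.conj α (.neg α)) γ)
          (.imp (.disj (.circ α) (.conj α (.neg α))) γ)))
  | a15 (α : VForm) :
      VAx b (.imp (vNot b (.neg α)) (vNot b (.neg (vNot b (.neg α)))))
  | a16 (α : VForm) :
      VAx b (.imp (vNot b (.neg (vNot b (.neg α)))) (vNot b (.neg α)))
  | a17 (α β : VForm) :
      VAx b (.imp (vNot b (.neg (.conj α β))) (.conj (vNot b (.neg α)) (vNot b (.neg β))))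
  | a18 (α β : VForm) :
      VAx b (.imp (.conj (vNot b (.neg α)) (vNot b (.neg β))) (vNot b (.neg (.conj α β))))

/-- Derivability in the Hilbert system for vD: axiom instances, hypotheses, modus
ponens, and the restricted rule (applied only to theorems, i.e. formulas derivable
from the empty set). -/
inductive VDer (b : VForm) : Set VForm → VForm → Prop
  | ax {Γ : Set VForm} {φ : VForm} : VAx b φ → VDer b Γ φ
  | hyp {Γ : Set VForm} {φ : VForm} : φ ∈ Γ → VDer b Γ φ
  | mp {Γ : Set VForm} {φ ψ : VForm} :
      VDer b Γ φ → VDer b Γ (.imp φ ψ) → VDer b Γ ψ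
  | negThm {Γ : Set VForm} {φ : VForm} :
      VDer b ∅ φ → VDer b Γ (.imp (.neg φ) (vNot b φ))

/-- Δ is α-saturated with respect to the vD consequence relation. -/
def VSaturated (b : VForm) (Δ : Set VForm) (α : VForm) : Prop :=
  ¬ VDer b Δ α ∧ ∀ β ∉ Δ, VDer b (Δ ∪ {β}) α

lemma VDer.id (b : VForm) (Γ : Set VForm) (φ : VForm) :
    VDer b Γ (.imp φ φ) := by
  have h1 := VDer.ax (Γ := Γ) (VAx.a2 (b := b) φ (.imp φ φ) φ)
  have h2 := VDer.ax (Γ := Γ) (VAx.a1 (b := b) φ (.imp φ φ))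
  have h3 := VDer.ax (Γ := Γ) (VAx.a1 (b := b) φ φ)
  exact h3.mp (h2.mp h1)

/-- Deduction theorem. -/
lemma VDer.deduction {b : VForm} {Γ : Set VForm} {ψ φ : VForm}
    (h : VDer b (Γ ∪ {ψ}) φ) : VDer b Γ (.imp ψ φ) := by
  generalize hΓ' : Γ ∪ {ψ} = Γ' at h
  induction h with
  | ax ha => exact (VDer.ax ha).mp (.ax (VAx.a1 (b := b) ..))
  | hyp hm =>
    subst hΓ'
    rcases hm with hm | hm
    · exact (VDer.hyp hm).mp (.ax (VAx.a1 (b := b) ..))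
    · rcases hm; exact VDer.id ..
  | mp _ _ ih1 ih2 =>
    exact (ih1 hΓ').mp ((ih2 hΓ').mp (.ax (VAx.a2 (b := b) ..)))
  | negThm he => exact (VDer.negThm he).mp (.ax (VAx.a1 (b := b) ..))

lemma VDer.hs {b : VForm} {Γ : Set VForm} {φ ψ χ : VForm}
    (h1 : VDer b Γ (.imp φ ψ)) (h2 : VDer b Γ (.imp ψ χ)) :
    VDer b Γ (.imp φ χ) :=
  h1.mp ((h2.mp (.ax (VAx.a1 (b := b) ..))).mp (.ax (VAx.a2 (b := b) ..)))

/-- In an α-saturated set Δ, ∘β ∈ Δ iff β ∉ Δ or ¬β ∉ Δ. -/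
theorem vD_saturated_circ (b : VForm) (Δ : Set VForm) (α : VForm)
    (h : VSaturated b Δ α) :
    ∀ β : VForm, VForm.circ β ∈ Δ ↔ (β ∉ Δ ∨ VForm.neg β ∉ Δ) := by
  obtain ⟨hnd, hsat⟩ := h
  intro β
  constructor
  · intro hc
    by_contra hcon
    push_neg at hcon
    obtain ⟨hb, hnb⟩ := hcon
    exact hnd ((VDer.hyp hnb).mp ((VDer.hyp hb).mp
      ((VDer.hyp hc).mp (.ax (VAx.a12 (b := b) β α)))))
  · intro hor
    by_contra hc
    -- Δ ⊢ ∘β → α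
    have h1 : VDer b Δ (.imp (.circ β) α) := VDer.deduction (hsat _ hc)
    -- Δ ⊢ (β ∧ ¬β) → α
    have h2 : VDer b Δ (.imp (.conj β (.neg β)) α) := by
      rcases hor with hb | hnb
      · exact (VDer.ax (VAx.a4 (b := b) β (.neg β))).hs (VDer.deduction (hsat _ hb))
      · exact (VDer.ax (VAx.a5 (b := b) β (.neg β))).hs (VDer.deduction (hsat _ hnb))
    exact hnd ((VDer.ax (VAx.a13 (b := b) β)).mp
      (h2.mp (h1.mp (.ax (VAx.a14 (b := b) β α)))))
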